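/- Let L > 0 and let φ : [0, L] → ℝ be continuous and positive with m := inf_{x ∈ [0,L]} φ(x) > 0 and M := sup_{x ∈ [0,L]} φ(x). Then for every function u in the Sobolev space H¹(0,L) with ∫_0^L u·φ² dx = 0, one has ∫_0^L (u')² φ² dx ≥ (m/M)²·(π²/L²)·∫_0^L u² φ² dx. -/

import Mathlib

open Real intervalIntegral Set Filter Topology

/-!
Split `[0, L]` at its midpoint `p`. On each half `u - u p` vanishes at one endpoint, and
completing the square against `c tan (c x)`, the logarithmic derivative of the eigenfunction
`cos (c x)`, gives the Dirichlet–Neumann Wirtinger inequality on that half; with `c = π / L`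
this yields `(π / L)² ∫ (u - u p)² ≤ ∫ u'²`. Since `m² ≤ φ² ≤ M²`, inserting the weight costs
the factor `(m / M)²`, and the weighted mean-zero condition gives
`∫ u² φ² ≤ ∫ (u - u p)² φ²`.
-/

section Wirtinger

variable {a b c : ℝ} {v v' : ℝ → ℝ}

lemma wirtinger_right_eq_zero_of_mul_lt (hab : a ≤ b) (hc : 0 ≤ c)
    (hcb : c * (b - a) < π / 2) (hv : ∀ x ∈ Icc a b, HasDerivAt v (v' x) x)
    (hv' : ContinuousOn v' (Icc a b)) (hvb : v b = 0) :
    c ^ 2 * ∫ x in a..b, v x ^ 2 ≤ ∫ x in a..b, v' x ^ 2 := by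
  set t : ℝ → ℝ := fun x => tan (c * (x - a))
  have hcos : ∀ x ∈ Icc a b, cos (c * (x - a)) ≠ 0 := fun x hx =>
    (cos_pos_of_mem_Ioo ⟨by nlinarith [pi_pos, hx.1], by nlinarith [hx.2]⟩).ne'
  have ht : ∀ x ∈ Icc a b, HasDerivAt t (c * (1 + t x ^ 2)) x := by
    intro x hx
    have hlin : HasDerivAt (fun y => c * (y - a)) c x := by
      simpa using ((hasDerivAt_id x).sub_const a).const_mul c
    have := (hasDerivAt_tan (hcos x hx)).comp x hlin
    rw [one_div, ← inv_one_add_tan_sq (hcos x hx), inv_inv] at this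
    exact this.congr_deriv (mul_comm _ _)
  have hvc : ContinuousOn v (Icc a b) := fun x hx => (hv x hx).continuousAt.continuousWithinAt
  have htc : ContinuousOn t (Icc a b) := fun x hx => (ht x hx).continuousAt.continuousWithinAt
  -- `c t v²` is a primitive of the cross terms that complete `v'²` to the square `(v' + c t v)²`
  set F' : ℝ → ℝ := fun x => (v' x + c * t x * v x) ^ 2 - v' x ^ 2 + c ^ 2 * v x ^ 2
  have hF : ∀ x ∈ Icc a b, HasDerivAt (fun y => c * t y * v y ^ 2) (F' x) x := by
    intro x hx
    refine (((ht x hx).const_mul c).mul ((hv x hx).fun_pow 2)).congr_deriv ?_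
    simp only [F']
    ring
  have hF'c : ContinuousOn F' (Icc a b) :=
    (((hv'.add ((continuousOn_const.mul htc).mul hvc)).pow 2).sub (hv'.pow 2)).add
      (continuousOn_const.mul (hvc.pow 2))
  have hFTC : ∫ x in a..b, F' x = 0 := by
    rw [integral_eq_sub_of_hasDerivAt (fun x hx => hF x (uIcc_of_le hab ▸ hx))
      (hF'c.intervalIntegrable_of_Icc hab)]
    simp [t, hvb]
  have hv'2 : IntervalIntegrable (fun x => v' x ^ 2) MeasureTheory.volume a b :=
    (hv'.pow 2).intervalIntegrable_of_Icc hab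
  calc c ^ 2 * ∫ x in a..b, v x ^ 2 = ∫ x in a..b, c ^ 2 * v x ^ 2 := by
        rw [integral_const_mul]
    _ ≤ ∫ x in a..b, (v' x ^ 2 + F' x) :=
        integral_mono_on hab
          ((continuousOn_const.mul (hvc.pow 2)).intervalIntegrable_of_Icc hab)
          (hv'2.add (hF'c.intervalIntegrable_of_Icc hab))
          (fun x _ => by nlinarith [sq_nonneg (v' x + c * t x * v x)])
    _ = ∫ x in a..b, v' x ^ 2 := by
        rw [integral_add hv'2 (hF'c.intervalIntegrable_of_Icc hab), hFTC, add_zero]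

lemma wirtinger_right_eq_zero (hab : a < b)
    (hv : ∀ x ∈ Icc a b, HasDerivAt v (v' x) x) (hv' : ContinuousOn v' (Icc a b))
    (hvb : v b = 0) :
    (π / (2 * (b - a))) ^ 2 * ∫ x in a..b, v x ^ 2 ≤ ∫ x in a..b, v' x ^ 2 := by
  have hc₀ : 0 < π / (2 * (b - a)) := div_pos pi_pos (by linarith)
  have hlim : Tendsto (fun c => c ^ 2 * ∫ x in a..b, v x ^ 2) (𝓝[<] (π / (2 * (b - a))))
      (𝓝 ((π / (2 * (b - a))) ^ 2 * ∫ x in a..b, v x ^ 2)) :=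
    ((continuous_pow 2).mul continuous_const).continuousAt.tendsto.mono_left nhdsWithin_le_nhds
  -- at the sharp constant the weight `tan` blows up at `b`, so approach it from below
  refine le_of_tendsto hlim ?_
  filter_upwards [Ioo_mem_nhdsLT hc₀] with c hc
  refine wirtinger_right_eq_zero_of_mul_lt hab.le hc.1.le ?_ hv hv' hvb
  have hba : 0 < b - a := by linarith
  calc c * (b - a) < π / (2 * (b - a)) * (b - a) := mul_lt_mul_of_pos_right hc.2 hba
    _ = π / 2 := by field_simp

lemma wirtinger_left_eq_zero (hab : a < b)
    (hv : ∀ x ∈ Icc a b, HasDerivAt v (v' x) x) (hv' : ContinuousOn v' (Icc a b))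
    (hva : v a = 0) :
    (π / (2 * (b - a))) ^ 2 * ∫ x in a..b, v x ^ 2 ≤ ∫ x in a..b, v' x ^ 2 := by
  have hrefl : MapsTo (fun x => a + b - x) (Icc a b) (Icc a b) := fun x hx =>
    ⟨by linarith [hx.2], by linarith [hx.1]⟩
  have key := wirtinger_right_eq_zero (v := fun x => v (a + b - x))
    (v' := fun x => -v' (a + b - x)) hab
    (fun x hx => (hv _ (hrefl hx)).comp_const_sub (a + b) x)
    ((hv'.comp (by fun_prop) hrefl).neg) (by simpa using hva)
  have hreflect : ∀ f : ℝ → ℝ, ∫ x in a..b, f (a + b - x) = ∫ x in a..b, f x := fun f => by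
    rw [integral_comp_sub_left, add_sub_cancel_right, add_sub_cancel_left]
  simpa only [neg_sq, hreflect fun x => v x ^ 2, hreflect fun x => v' x ^ 2] using key

lemma poincare_sub_midpoint {u u' : ℝ → ℝ} (hab : a < b)
    (hu : ∀ x ∈ Icc a b, HasDerivAt u (u' x) x) (hu' : ContinuousOn u' (Icc a b)) :
    (π / (b - a)) ^ 2 * ∫ x in a..b, (u x - u ((a + b) / 2)) ^ 2 ≤
      ∫ x in a..b, u' x ^ 2 := by
  set p := (a + b) / 2 with hp
  have hap : a < p := by linarith
  have hpb : p < b := by linarith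
  have hsub₁ : Icc a p ⊆ Icc a b := Icc_subset_Icc_right hpb.le
  have hsub₂ : Icc p b ⊆ Icc a b := Icc_subset_Icc_left hap.le
  have hv : ∀ x ∈ Icc a b, HasDerivAt (fun y => u y - u p) (u' x) x := fun x hx =>
    (hu x hx).sub_const _
  have h₁ := wirtinger_right_eq_zero hap (fun x hx => hv x (hsub₁ hx))
    (hu'.mono hsub₁) (sub_self _)
  have h₂ := wirtinger_left_eq_zero hpb (fun x hx => hv x (hsub₂ hx))
    (hu'.mono hsub₂) (sub_self _)
  have hp₁ : 2 * (p - a) = b - a := by ring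
  have hp₂ : 2 * (b - p) = b - a := by ring
  rw [hp₁] at h₁
  rw [hp₂] at h₂
  have hucont : ContinuousOn u (Icc a b) := fun x hx => (hu x hx).continuousAt.continuousWithinAt
  have hsplit : ∀ f : ℝ → ℝ, ContinuousOn f (Icc a b) →
      ∫ x in a..b, f x = (∫ x in a..p, f x) + ∫ x in p..b, f x := fun f hf =>
    (integral_add_adjacent_intervals ((hf.mono hsub₁).intervalIntegrable_of_Icc hap.le)
      ((hf.mono hsub₂).intervalIntegrable_of_Icc hpb.le)).symm
  rw [hsplit (fun x => u' x ^ 2) (by fun_prop), hsplit (fun x => (u x - u p) ^ 2) (by fun_prop),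
    mul_add]
  linarith

end Wirtinger

section Weighted

variable {a b K : ℝ} {f w : ℝ → ℝ}

lemma integral_mul_le_const_mul_integral (hab : a ≤ b) (hf : ContinuousOn f (Icc a b))
    (hw : ContinuousOn w (Icc a b)) (hf₀ : ∀ x ∈ Icc a b, 0 ≤ f x)
    (hwK : ∀ x ∈ Icc a b, w x ≤ K) :
    ∫ x in a..b, f x * w x ≤ K * ∫ x in a..b, f x := by
  rw [← integral_const_mul]
  refine integral_mono_on hab ((hf.mul hw).intervalIntegrable_of_Icc hab)
    ((continuousOn_const.mul hf).intervalIntegrable_of_Icc hab) fun x hx => ?_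
  rw [mul_comm K]
  exact mul_le_mul_of_nonneg_left (hwK x hx) (hf₀ x hx)

lemma const_mul_integral_le_integral_mul (hab : a ≤ b) (hf : ContinuousOn f (Icc a b))
    (hw : ContinuousOn w (Icc a b)) (hf₀ : ∀ x ∈ Icc a b, 0 ≤ f x)
    (hKw : ∀ x ∈ Icc a b, K ≤ w x) :
    K * ∫ x in a..b, f x ≤ ∫ x in a..b, f x * w x := by
  rw [← integral_const_mul]
  refine integral_mono_on hab ((continuousOn_const.mul hf).intervalIntegrable_of_Icc hab)
    ((hf.mul hw).intervalIntegrable_of_Icc hab) fun x hx => ?_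
  rw [mul_comm K]
  exact mul_le_mul_of_nonneg_left (hKw x hx) (hf₀ x hx)

lemma integral_sq_mul_le_integral_sub_sq_mul {u : ℝ → ℝ} (hab : a ≤ b)
    (hu : ContinuousOn u (Icc a b)) (hw : ContinuousOn w (Icc a b))
    (hw₀ : ∀ x ∈ Icc a b, 0 ≤ w x) (hmean : ∫ x in a..b, u x * w x = 0) (k : ℝ) :
    ∫ x in a..b, u x ^ 2 * w x ≤ ∫ x in a..b, (u x - k) ^ 2 * w x := by
  have hint : ∀ g : ℝ → ℝ, ContinuousOn g (Icc a b) →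
      IntervalIntegrable g MeasureTheory.volume a b :=
    fun g hg => hg.intervalIntegrable_of_Icc hab
  have hexpand : ∫ x in a..b, (u x - k) ^ 2 * w x
      = (∫ x in a..b, u x ^ 2 * w x) - 2 * k * (∫ x in a..b, u x * w x)
        + k ^ 2 * ∫ x in a..b, w x := by
    rw [← integral_const_mul, ← integral_const_mul,
      ← integral_sub (hint _ (by fun_prop)) (hint _ (by fun_prop)),
      ← integral_add (hint _ (by fun_prop)) (hint _ (by fun_prop))]
    exact integral_congr fun x _ => by ring
  rw [hexpand, hmean]
  linarith [mul_nonneg (sq_nonneg k) (integral_nonneg (μ := MeasureTheory.volume) hab hw₀)]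

end Weighted

theorem stmt_8 (L m M : ℝ) (φ : ℝ → ℝ)
    (hL : 0 < L)
    (hφcont : ContinuousOn φ (Set.Icc 0 L))
    (hm : IsGLB (φ '' Set.Icc 0 L) m) (hm_pos : 0 < m)
    (hM : IsLUB (φ '' Set.Icc 0 L) M) :
    ∀ u u' : ℝ → ℝ,
      (∀ x ∈ Set.Icc 0 L, HasDerivAt u (u' x) x) →
      ContinuousOn u' (Set.Icc 0 L) →
      (∫ x in (0:ℝ)..L, u x * (φ x) ^ 2) = 0 →
      (∫ x in (0:ℝ)..L, (u' x) ^ 2 * (φ x) ^ 2) ≥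
        (m / M) ^ 2 * (π ^ 2 / L ^ 2) * ∫ x in (0:ℝ)..L, (u x) ^ 2 * (φ x) ^ 2 := by
  intro u u' hu hu' hmean
  have hφm : ∀ x ∈ Icc 0 L, m ≤ φ x := fun x hx => hm.1 ⟨x, hx, rfl⟩
  have hφM : ∀ x ∈ Icc 0 L, φ x ≤ M := fun x hx => hM.1 ⟨x, hx, rfl⟩
  have h0 : (0 : ℝ) ∈ Icc 0 L := ⟨le_rfl, hL.le⟩
  have hM_pos : 0 < M := hm_pos.trans_le ((hφm 0 h0).trans (hφM 0 h0))
  have hucont : ContinuousOn u (Icc 0 L) := fun x hx => (hu x hx).continuousAt.continuousWithinAt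
  have hpoincare := poincare_sub_midpoint hL hu hu'
  rw [sub_zero, zero_add] at hpoincare
  set k := u (L / 2)
  rw [ge_iff_le]
  calc (m / M) ^ 2 * (π ^ 2 / L ^ 2) * ∫ x in (0:ℝ)..L, u x ^ 2 * φ x ^ 2
      ≤ (m / M) ^ 2 * (π ^ 2 / L ^ 2) * ∫ x in (0:ℝ)..L, (u x - k) ^ 2 * φ x ^ 2 := by
        gcongr
        exact integral_sq_mul_le_integral_sub_sq_mul hL.le hucont (by fun_prop)
          (fun x _ => sq_nonneg _) hmean k
    _ ≤ (m / M) ^ 2 * (π ^ 2 / L ^ 2) * (M ^ 2 * ∫ x in (0:ℝ)..L, (u x - k) ^ 2) := by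
        gcongr
        exact integral_mul_le_const_mul_integral hL.le (by fun_prop) (by fun_prop)
          (fun x _ => sq_nonneg _) fun x hx =>
            pow_le_pow_left₀ (hm_pos.le.trans (hφm x hx)) (hφM x hx) 2
    _ = m ^ 2 * ((π / L) ^ 2 * ∫ x in (0:ℝ)..L, (u x - k) ^ 2) := by
        field_simp
    _ ≤ m ^ 2 * ∫ x in (0:ℝ)..L, u' x ^ 2 := by gcongr
    _ ≤ ∫ x in (0:ℝ)..L, u' x ^ 2 * φ x ^ 2 :=
        const_mul_integral_le_integral_mul hL.le (by fun_prop) (by fun_prop)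
          (fun x _ => sq_nonneg _) fun x hx => pow_le_pow_left₀ hm_pos.le (hφm x hx) 2
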